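/- arXiv:quant-ph/9605038 — 2 statements merged into one kernel-verified Lean document; each statement's English description precedes it below -/
import Mathlib

section
/- (Witness characterization of separability) A state ρ on H₁ ⊗ H₂ is separable if and only if Tr(Aρ) ≥ 0 for every Hermitian operator A satisfying Tr(A (P ⊗ Q)) ≥ 0 for all orthogonal projections P on H₁ and Q on H₂. -/
open Matrix
open scoped Kronecker ComplexOrder

/-- A quantum state: positive semidefinite operator of trace one. -/
def IsState {ι : Type*} [Fintype ι] [DecidableEq ι] (A : Matrix ι ι ℂ) : Prop :=
  A.PosSemidef ∧ A.trace = 1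

/-- Finite convex combinations of product states on `C^m ⊗ C^n`. -/
def SepCombos (m n : ℕ) : Set (Matrix (Fin m × Fin n) (Fin m × Fin n) ℂ) :=
  {ρ | ∃ (k : ℕ) (p : Fin k → ℝ) (σ : Fin k → Matrix (Fin m) (Fin m) ℂ)
      (τ : Fin k → Matrix (Fin n) (Fin n) ℂ),
      (∀ i, 0 ≤ p i) ∧ (∑ i, p i) = 1 ∧ (∀ i, IsState (σ i)) ∧ (∀ i, IsState (τ i)) ∧
      ρ = ∑ i, (p i : ℂ) • (σ i ⊗ₖ τ i)}

/-- A separable state: a state in the closure of convex combinations of product states. -/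
def SepState {m n : ℕ} (ρ : Matrix (Fin m × Fin n) (Fin m × Fin n) ℂ) : Prop :=
  IsState ρ ∧ ρ ∈ closure (SepCombos m n)

/-- A positive map: maps positive semidefinite matrices to positive semidefinite ones. -/
def IsPositiveMap {n k : ℕ}
    (Λ : Matrix (Fin n) (Fin n) ℂ →ₗ[ℂ] Matrix (Fin k) (Fin k) ℂ) : Prop :=
  ∀ A, A.PosSemidef → (Λ A).PosSemidef

/-- The map `I ⊗ Λ` acting on operators on `C^m ⊗ C^n`. -/
def idOtimes {m n k : ℕ}
    (Λ : Matrix (Fin n) (Fin n) ℂ →ₗ[ℂ] Matrix (Fin k) (Fin k) ℂ)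
    (ρ : Matrix (Fin m × Fin n) (Fin m × Fin n) ℂ) :
    Matrix (Fin m × Fin k) (Fin m × Fin k) ℂ :=
  fun p q => Λ (fun μ ν => ρ (p.1, μ) (q.1, ν)) p.2 q.2

/-- The map `Λ ⊗ I_k`. -/
def otimesId {n m : ℕ}
    (Λ : Matrix (Fin n) (Fin n) ℂ →ₗ[ℂ] Matrix (Fin m) (Fin m) ℂ) (k : ℕ)
    (A : Matrix (Fin n × Fin k) (Fin n × Fin k) ℂ) :
    Matrix (Fin m × Fin k) (Fin m × Fin k) ℂ :=
  fun p q => Λ (fun i j => A (i, p.2) (j, q.2)) p.1 q.1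

/-- Complete positivity. -/
def IsCompletelyPositive {n m : ℕ}
    (Λ : Matrix (Fin n) (Fin n) ℂ →ₗ[ℂ] Matrix (Fin m) (Fin m) ℂ) : Prop :=
  ∀ k : ℕ, ∀ A : Matrix (Fin n × Fin k) (Fin n × Fin k) ℂ,
    A.PosSemidef → (otimesId Λ k A).PosSemidef

/-- Partial transposition with respect to the second factor. -/
def ptranspose {α β : Type*} (ρ : Matrix (α × β) (α × β) ℂ) : Matrix (α × β) (α × β) ℂ :=
  fun p q => ρ (p.1, q.2) (q.1, p.2)

/-- An orthogonal projection matrix. -/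
def IsProjMat {ι : Type*} [Fintype ι] (P : Matrix ι ι ℂ) : Prop :=
  P.IsHermitian ∧ P * P = P

/-- The transpose map as a linear map. -/
def transposeLM (n : ℕ) : Matrix (Fin n) (Fin n) ℂ →ₗ[ℂ] Matrix (Fin n) (Fin n) ℂ where
  toFun := Matrix.transpose
  map_add' := fun _ _ => Matrix.transpose_add _ _
  map_smul' := fun _ _ => Matrix.transpose_smul _ _

set_option linter.unusedSectionVars false
set_option maxHeartbeats 1000000

section SepHelpers

variable {ι : Type*} [Fintype ι] [DecidableEq ι]

lemma isClosed_nonneg_complex : IsClosed {z : ℂ | 0 ≤ z} := by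
  have h : {z : ℂ | 0 ≤ z} = {z : ℂ | 0 ≤ z.re} ∩ {z : ℂ | z.im = 0} := by
    ext z
    simp only [Set.mem_setOf_eq, Set.mem_inter_iff, Complex.le_def, Complex.zero_re,
      Complex.zero_im]
    exact ⟨fun ⟨h1, h2⟩ => ⟨h1, h2.symm⟩, fun ⟨h1, h2⟩ => ⟨h1, h2.symm⟩⟩
  rw [h]
  exact (isClosed_le continuous_const Complex.continuous_re).inter
    (isClosed_eq Complex.continuous_im continuous_const)

lemma continuous_traceMulLeft (A : Matrix ι ι ℂ) :
    Continuous fun X : Matrix ι ι ℂ => (A * X).trace :=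
  LinearMap.continuous_of_finiteDimensional
    ({ toFun := fun X : Matrix ι ι ℂ => (A * X).trace
       map_add' := fun X Y => by
         show (A * (X + Y)).trace = (A * X).trace + (A * Y).trace
         rw [Matrix.mul_add, Matrix.trace_add]
       map_smul' := fun c X => by
         show (A * (c • X)).trace = c • (A * X).trace
         rw [Matrix.mul_smul, Matrix.trace_smul] }
      : Matrix ι ι ℂ →ₗ[ℂ] ℂ)

lemma diagonal_eq_sum_smul_single (d : ι → ℂ) :
    Matrix.diagonal d = ∑ j, d j • Matrix.single j j (1 : ℂ) := by
  ext i k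
  rw [Matrix.sum_apply]
  by_cases h : i = k
  · subst h
    rw [Finset.sum_eq_single i]
    · simp [Matrix.single]
    · intro b _ hb
      simp [Matrix.single, hb]
    · simp
  · rw [Finset.sum_eq_zero, Matrix.diagonal_apply_ne _ h]
    intro b _
    simp only [Matrix.smul_apply, Matrix.single, Matrix.of_apply, smul_eq_mul]
    rw [if_neg, mul_zero]
    rintro ⟨rfl, rfl⟩
    exact h rfl

lemma stdBasisMatrix_conjT (j : ι) :
    (Matrix.single j j (1 : ℂ))ᴴ = Matrix.single j j 1 := by
  ext a b
  simp only [Matrix.conjTranspose_apply, Matrix.single, Matrix.of_apply]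
  by_cases h1 : j = a <;> by_cases h2 : j = b <;> simp [h1, h2]

lemma psd_decomp {σ : Matrix ι ι ℂ} (h : σ.PosSemidef) :
    ∃ (c : ι → ℝ) (P : ι → Matrix ι ι ℂ),
      (∀ j, 0 ≤ c j) ∧ (∀ j, IsProjMat (P j)) ∧ σ = ∑ j, (c j : ℂ) • P j := by
  have hH : σ.IsHermitian := h.isHermitian
  set U : Matrix ι ι ℂ := (hH.eigenvectorUnitary : Matrix ι ι ℂ) with hU
  have hUU' : star U * U = 1 := Matrix.mem_unitaryGroup_iff'.mp hH.eigenvectorUnitary.2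
  have hEE : ∀ j : ι, Matrix.single j j (1:ℂ) * Matrix.single j j 1
      = Matrix.single j j 1 := fun j => by
    rw [Matrix.single_mul_single_same, one_mul]
  refine ⟨hH.eigenvalues, fun j => U * Matrix.single j j 1 * star U,
    h.eigenvalues_nonneg, fun j => ⟨?_, ?_⟩, ?_⟩
  · show _ᴴ = _
    calc (U * Matrix.single j j 1 * star U)ᴴ
        = (star U)ᴴ * (Matrix.single j j (1:ℂ))ᴴ * Uᴴ := by
          rw [Matrix.conjTranspose_mul, Matrix.conjTranspose_mul, Matrix.mul_assoc]
      _ = U * Matrix.single j j 1 * star U := by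
          rw [stdBasisMatrix_conjT]
          simp [Matrix.star_eq_conjTranspose]
  · simp only [Matrix.mul_assoc]
    rw [← Matrix.mul_assoc (star U) U, hUU', Matrix.one_mul,
      ← Matrix.mul_assoc (Matrix.single j j 1), hEE]
  · conv_lhs => rw [hH.spectral_theorem]
    have hd : Matrix.diagonal (RCLike.ofReal ∘ hH.eigenvalues)
        = ∑ j, ((hH.eigenvalues j : ℝ) : ℂ) • Matrix.single j j (1:ℂ) := by
      rw [diagonal_eq_sum_smul_single]
      rfl
    rw [hd, Unitary.conjStarAlgAut_apply, Matrix.mul_sum, Matrix.sum_mul]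
    refine Finset.sum_congr rfl fun j _ => ?_
    rw [Matrix.mul_smul, Matrix.smul_mul]

lemma sum_kron {κ a b c d : Type*} [Fintype κ] (f : κ → Matrix a b ℂ) (B : Matrix c d ℂ) :
    (∑ j, f j) ⊗ₖ B = ∑ j, (f j) ⊗ₖ B := by
  ext ⟨x, y⟩ ⟨z, w⟩
  simp [Matrix.kroneckerMap_apply, Matrix.sum_apply, Finset.sum_mul]

lemma kron_sum {κ a b c d : Type*} [Fintype κ] (A : Matrix a b ℂ) (f : κ → Matrix c d ℂ) :
    A ⊗ₖ (∑ j, f j) = ∑ j, A ⊗ₖ (f j) := by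
  ext ⟨x, y⟩ ⟨z, w⟩
  simp [Matrix.kroneckerMap_apply, Matrix.sum_apply, Finset.mul_sum]

lemma kron_isHermitian {a b : Type*} [Fintype a] [Fintype b]
    {σ : Matrix a a ℂ} {τ : Matrix b b ℂ} (hσ : σ.IsHermitian) (hτ : τ.IsHermitian) :
    (σ ⊗ₖ τ).IsHermitian := by
  ext ⟨x, y⟩ ⟨z, w⟩
  simp only [Matrix.conjTranspose_apply, Matrix.kroneckerMap_apply, star_mul',
    hσ.apply, hτ.apply]

lemma psd_trace_nonneg {M : Matrix ι ι ℂ} (h : M.PosSemidef) : 0 ≤ M.trace := by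
  refine Finset.sum_nonneg fun i _ => ?_
  have := h.dotProduct_mulVec_nonneg (Pi.single i 1)
  simpa [Matrix.mulVec_single, dotProduct, Pi.single_apply] using this

lemma smul_psd {M : Matrix ι ι ℂ} (h : M.PosSemidef) {r : ℝ} (hr : 0 ≤ r) :
    ((r : ℂ) • M).PosSemidef := by
  refine Matrix.PosSemidef.of_dotProduct_mulVec_nonneg ?_ ?_
  · show _ᴴ = _
    rw [Matrix.conjTranspose_smul, h.1.eq]
    norm_num
  · intro x
    rw [Matrix.smul_mulVec, dotProduct_smul, smul_eq_mul]
    exact mul_nonneg (by exact_mod_cast hr) (h.dotProduct_mulVec_nonneg x)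

lemma proj_trace_zero {P : Matrix ι ι ℂ} (hP : IsProjMat P) (h : P.trace = 0) : P = 0 := by
  have h1 : (Pᴴ * P).trace = 0 := by rw [hP.1.eq, hP.2, h]
  have h2 : ∀ i j : ι, star (P i j) * P i j = 0 := by
    have hsum : ∑ j, ∑ i, star (P i j) * P i j = 0 := by
      rw [← h1]
      simp [Matrix.trace, Matrix.diag, Matrix.mul_apply, Matrix.conjTranspose_apply]
    have hnn : ∀ j ∈ Finset.univ, (0:ℂ) ≤ ∑ i, star (P i j) * P i j := fun j _ =>
      Finset.sum_nonneg fun i _ => star_mul_self_nonneg _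
    intro i j
    have hcol := (Finset.sum_eq_zero_iff_of_nonneg hnn).mp hsum j (Finset.mem_univ j)
    have hnn2 : ∀ i ∈ Finset.univ, (0:ℂ) ≤ star (P i j) * P i j := fun i _ =>
      star_mul_self_nonneg _
    exact (Finset.sum_eq_zero_iff_of_nonneg hnn2).mp hcol i (Finset.mem_univ i)
  ext i j
  have := h2 i j
  rw [mul_eq_zero] at this
  rcases this with h' | h'
  · simpa using congrArg star h'
  · exact h'

lemma proj_psd {P : Matrix ι ι ℂ} (hP : IsProjMat P) : P.PosSemidef := by
  have : P = Pᴴ * P := by rw [hP.1.eq, hP.2]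
  rw [this]
  exact Matrix.posSemidef_conjTranspose_mul_self P

noncomputable def witnessMat (f : Matrix ι ι ℂ →L[ℝ] ℝ) : Matrix ι ι ℂ :=
  fun i j =>
    (((f (Matrix.single i j 1) + f (Matrix.single j i 1) : ℝ) : ℂ)
      + ((f (Complex.I • Matrix.single i j 1)
          - f (Complex.I • Matrix.single j i 1) : ℝ) : ℂ) * Complex.I) / 2

lemma witnessMat_isHermitian (f : Matrix ι ι ℂ →L[ℝ] ℝ) : (witnessMat f).IsHermitian := by
  ext i j
  simp only [Matrix.conjTranspose_apply, witnessMat]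
  rw [star_div₀]
  push_cast
  simp only [star_add, star_mul', Complex.star_def, Complex.conj_I, Complex.conj_ofReal,
    map_add, map_sub, map_ofNat]
  ring

lemma sum_symmetrize (F : ι → ι → ℂ) :
    ∑ i, ∑ j, F i j = ∑ i, ∑ j, (F i j + F j i) / 2 := by
  have h : ∑ i, ∑ j, F j i = ∑ i, ∑ j, F i j := Finset.sum_comm
  rw [eq_comm]
  calc ∑ i, ∑ j, (F i j + F j i) / 2
      = ((∑ i, ∑ j, F i j) + ∑ i, ∑ j, F j i) / 2 := by
        simp only [add_div, Finset.sum_add_distrib, Finset.sum_div]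
    _ = ∑ i, ∑ j, F i j := by rw [h, add_self_div_two]

lemma csmul_decomp (z : ℂ) (M : Matrix ι ι ℂ) :
    z • M = z.re • M + z.im • (Complex.I • M) := by
  ext i j
  simp only [Matrix.add_apply, Matrix.smul_apply, smul_eq_mul, Complex.real_smul]
  conv_lhs => rw [← Complex.re_add_im z]
  ring

lemma trace_witnessMat (f : Matrix ι ι ℂ →L[ℝ] ℝ) {X : Matrix ι ι ℂ}
    (hX : X.IsHermitian) :
    (witnessMat f * X).trace = ((f X : ℝ) : ℂ) := by
  have hXeq : X = ∑ i, ∑ j, ((X i j).re • Matrix.single i j (1:ℂ)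
      + (X i j).im • (Complex.I • Matrix.single i j 1)) := by
    conv_lhs => rw [Matrix.matrix_eq_sum_single X]
    refine Finset.sum_congr rfl fun i _ => Finset.sum_congr rfl fun j _ => ?_
    rw [← csmul_decomp, Matrix.smul_single, smul_eq_mul, mul_one]
  have hfX : ((f X : ℝ) : ℂ) = ∑ i, ∑ j, (((X i j).re * f (Matrix.single i j 1)
      + (X i j).im * f (Complex.I • Matrix.single i j 1) : ℝ) : ℂ) := by
    conv_lhs => rw [hXeq]
    rw [map_sum]
    push_cast
    refine Finset.sum_congr rfl fun i _ => ?_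
    rw [map_sum]
    push_cast
    refine Finset.sum_congr rfl fun j _ => ?_
    rw [map_add, f.map_smul, f.map_smul]
    push_cast [smul_eq_mul]
    ring
  have htr : (witnessMat f * X).trace = ∑ i, ∑ j, witnessMat f i j * X j i := by
    simp [Matrix.trace, Matrix.diag, Matrix.mul_apply]
  rw [htr, hfX, sum_symmetrize (fun i j => witnessMat f i j * X j i),
    sum_symmetrize (fun i j => (((X i j).re * f (Matrix.single i j 1)
      + (X i j).im * f (Complex.I • Matrix.single i j 1) : ℝ) : ℂ))]
  refine Finset.sum_congr rfl fun i _ => Finset.sum_congr rfl fun j _ => ?_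
  simp only [witnessMat]
  have h3 : (X j i).re = (X i j).re := by
    rw [← hX.apply j i]; simp
  have h4 : (X j i).im = -(X i j).im := by
    rw [← hX.apply j i]; simp
  have h1 : X j i = Complex.ofReal ((X i j).re) - Complex.ofReal ((X i j).im) * Complex.I := by
    apply Complex.ext <;> simp [h3, h4]
  have h2 : X i j = Complex.ofReal ((X i j).re) + Complex.ofReal ((X i j).im) * Complex.I :=
    (Complex.re_add_im _).symm
  rw [h3, h4]
  push_cast
  set a := (X i j).re with ha
  set b := (X i j).im with hb
  rw [h1, h2]
  ring_nf
  simp only [Complex.I_sq]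
  ring

end SepHelpers

instance matrixLocallyConvex {a b : Type*} :
    LocallyConvexSpace ℝ (Matrix a b ℂ) :=
  Pi.locallyConvexSpace

lemma real_smul_mat {a b : Type*} (r : ℝ) (M : Matrix a b ℂ) :
    r • M = (r : ℂ) • M := by
  ext i j
  simp [Complex.real_smul]

lemma sepCombos_convex (m n : ℕ) : Convex ℝ (SepCombos m n) := by
  rintro x hx y hy a b ha hb hab
  obtain ⟨k₁, p₁, σ₁, τ₁, hp₁, hs₁, hσ₁, hτ₁, rfl⟩ := hx
  obtain ⟨k₂, p₂, σ₂, τ₂, hp₂, hs₂, hσ₂, hτ₂, rfl⟩ := hy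
  refine ⟨k₁ + k₂, Fin.append (fun i => a * p₁ i) (fun i => b * p₂ i),
    Fin.append σ₁ σ₂, Fin.append τ₁ τ₂, ?_, ?_, ?_, ?_, ?_⟩
  · intro i
    refine Fin.addCases (fun i => ?_) (fun i => ?_) i
    · rw [Fin.append_left]; exact mul_nonneg ha (hp₁ i)
    · rw [Fin.append_right]; exact mul_nonneg hb (hp₂ i)
  · rw [Fin.sum_univ_add]
    simp only [Fin.append_left, Fin.append_right, ← Finset.mul_sum, hs₁, hs₂]
    simpa using hab
  · intro i
    refine Fin.addCases (fun i => ?_) (fun i => ?_) i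
    · rw [Fin.append_left]; exact hσ₁ i
    · rw [Fin.append_right]; exact hσ₂ i
  · intro i
    refine Fin.addCases (fun i => ?_) (fun i => ?_) i
    · rw [Fin.append_left]; exact hτ₁ i
    · rw [Fin.append_right]; exact hτ₂ i
  · rw [Fin.sum_univ_add]
    simp only [Fin.append_left, Fin.append_right]
    rw [real_smul_mat a, real_smul_mat b, Finset.smul_sum, Finset.smul_sum]
    congr 1 <;> refine Finset.sum_congr rfl fun i _ => ?_ <;>
      rw [smul_smul] <;> push_cast <;> ring_nf

lemma trace_mul_kron_nonneg {m n : ℕ} (A : Matrix (Fin m × Fin n) (Fin m × Fin n) ℂ)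
    (hPQ : ∀ (P : Matrix (Fin m) (Fin m) ℂ) (Q : Matrix (Fin n) (Fin n) ℂ),
      IsProjMat P → IsProjMat Q → 0 ≤ (A * (P ⊗ₖ Q)).trace)
    {σ : Matrix (Fin m) (Fin m) ℂ} {τ : Matrix (Fin n) (Fin n) ℂ}
    (hσ : σ.PosSemidef) (hτ : τ.PosSemidef) :
    0 ≤ (A * (σ ⊗ₖ τ)).trace := by
  obtain ⟨c, P, hc, hP, rfl⟩ := psd_decomp hσ
  obtain ⟨d, Q, hd, hQ, rfl⟩ := psd_decomp hτ
  rw [sum_kron]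
  have hterm : ∀ j, ((c j : ℂ) • P j) ⊗ₖ (∑ l, (d l : ℂ) • Q l)
      = ∑ l, ((c j : ℂ) * (d l : ℂ)) • (P j ⊗ₖ Q l) := by
    intro j
    rw [kron_sum]
    refine Finset.sum_congr rfl fun l _ => ?_
    rw [Matrix.smul_kronecker, Matrix.kronecker_smul, smul_smul]
  simp only [hterm]
  rw [Matrix.mul_sum, Matrix.trace_sum]
  refine Finset.sum_nonneg fun j _ => ?_
  rw [Matrix.mul_sum, Matrix.trace_sum]
  refine Finset.sum_nonneg fun l _ => ?_
  rw [Matrix.mul_smul, Matrix.trace_smul, smul_eq_mul]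
  exact mul_nonneg (mul_nonneg (by exact_mod_cast hc j) (by exact_mod_cast hd l))
    (hPQ (P j) (Q l) (hP j) (hQ l))

/-- witness characterization of separability (Theorem 1 of the paper). -/
theorem separable_iff_witness {m n : ℕ}
    (ρ : Matrix (Fin m × Fin n) (Fin m × Fin n) ℂ) (hρ : IsState ρ) :
    SepState ρ ↔
      ∀ A : Matrix (Fin m × Fin n) (Fin m × Fin n) ℂ, A.IsHermitian →
        (∀ (P : Matrix (Fin m) (Fin m) ℂ) (Q : Matrix (Fin n) (Fin n) ℂ),
          IsProjMat P → IsProjMat Q → 0 ≤ (A * (P ⊗ₖ Q)).trace) →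
        0 ≤ (A * ρ).trace := by
  constructor
  · -- forward direction
    rintro ⟨-, hcl⟩ A hA hPQ
    have hsub : SepCombos m n ⊆ {X | 0 ≤ (A * X).trace} := by
      rintro x ⟨k, p, σ, τ, hp, hs, hσ, hτ, rfl⟩
      simp only [Set.mem_setOf_eq]
      rw [Matrix.mul_sum, Matrix.trace_sum]
      refine Finset.sum_nonneg fun i _ => ?_
      rw [Matrix.mul_smul, Matrix.trace_smul, smul_eq_mul]
      exact mul_nonneg (by exact_mod_cast hp i)
        (trace_mul_kron_nonneg A hPQ (hσ i).1 (hτ i).1)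
    have hclosed : IsClosed {X : Matrix (Fin m × Fin n) (Fin m × Fin n) ℂ | 0 ≤ (A * X).trace} :=
      isClosed_nonneg_complex.preimage (continuous_traceMulLeft A)
    exact closure_minimal hsub hclosed hcl
  · -- backward direction
    intro H
    refine ⟨hρ, ?_⟩
    by_contra hc
    obtain ⟨f, u, hfu, hsep⟩ :=
      geometric_hahn_banach_point_closed ((sepCombos_convex m n).closure) isClosed_closure hc
    set A : Matrix (Fin m × Fin n) (Fin m × Fin n) ℂ :=
      witnessMat f - (u : ℂ) • 1 with hAdef
    have hA : A.IsHermitian := by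
      refine (witnessMat_isHermitian f).sub ?_
      show _ᴴ = _
      rw [Matrix.conjTranspose_smul, Matrix.conjTranspose_one]
      norm_num
    have htrace : ∀ X : Matrix (Fin m × Fin n) (Fin m × Fin n) ℂ, X.IsHermitian →
        (A * X).trace = ((f X : ℝ) : ℂ) - (u : ℂ) * X.trace := by
      intro X hX
      rw [hAdef, Matrix.sub_mul, Matrix.trace_sub, trace_witnessMat f hX,
        Matrix.smul_mul, Matrix.one_mul, Matrix.trace_smul, smul_eq_mul]
    have hwit : ∀ (P : Matrix (Fin m) (Fin m) ℂ) (Q : Matrix (Fin n) (Fin n) ℂ),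
        IsProjMat P → IsProjMat Q → 0 ≤ (A * (P ⊗ₖ Q)).trace := by
      intro P Q hP hQ
      by_cases hP0 : P = 0
      · simp [hP0, Matrix.zero_kronecker]
      by_cases hQ0 : Q = 0
      · simp [hQ0, Matrix.kronecker_zero]
      have hPpsd := proj_psd hP
      have hQpsd := proj_psd hQ
      have hPt := psd_trace_nonneg hPpsd
      have hQt := psd_trace_nonneg hQpsd
      have hPtre : P.trace = ((P.trace.re : ℝ) : ℂ) := by
        have := (Complex.le_def.mp hPt).2
        apply Complex.ext <;> simp [← this]
      have hQtre : Q.trace = ((Q.trace.re : ℝ) : ℂ) := by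
        have := (Complex.le_def.mp hQt).2
        apply Complex.ext <;> simp [← this]
      set rP := P.trace.re with hrP
      set rQ := Q.trace.re with hrQ
      have hrPpos : 0 < rP := by
        rcases lt_or_eq_of_le ((Complex.le_def.mp hPt).1) with h | h
        · simpa using h
        · exfalso
          apply hP0
          apply proj_trace_zero hP
          rw [hPtre, hrP, ← h]
          simp
      have hrQpos : 0 < rQ := by
        rcases lt_or_eq_of_le ((Complex.le_def.mp hQt).1) with h | h
        · simpa using h
        · exfalso
          apply hQ0
          apply proj_trace_zero hQ
          rw [hQtre, hrQ, ← h]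
          simp
      set σ : Matrix (Fin m) (Fin m) ℂ := ((rP⁻¹ : ℝ) : ℂ) • P with hσdef
      set τ : Matrix (Fin n) (Fin n) ℂ := ((rQ⁻¹ : ℝ) : ℂ) • Q with hτdef
      have hσstate : IsState σ := by
        refine ⟨smul_psd hPpsd (inv_nonneg.mpr hrPpos.le), ?_⟩
        rw [hσdef, Matrix.trace_smul, smul_eq_mul, hPtre]
        rw [← Complex.ofReal_mul, inv_mul_cancel₀ hrPpos.ne']
        norm_num
      have hτstate : IsState τ := by
        refine ⟨smul_psd hQpsd (inv_nonneg.mpr hrQpos.le), ?_⟩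
        rw [hτdef, Matrix.trace_smul, smul_eq_mul, hQtre]
        rw [← Complex.ofReal_mul, inv_mul_cancel₀ hrQpos.ne']
        norm_num
      have hPeq : P = ((rP : ℝ) : ℂ) • σ := by
        rw [hσdef, smul_smul, ← Complex.ofReal_mul, mul_inv_cancel₀ hrPpos.ne']
        norm_num
      have hQeq : Q = ((rQ : ℝ) : ℂ) • τ := by
        rw [hτdef, smul_smul, ← Complex.ofReal_mul, mul_inv_cancel₀ hrQpos.ne']
        norm_num
      have hmem : σ ⊗ₖ τ ∈ SepCombos m n := by
        refine ⟨1, fun _ => 1, fun _ => σ, fun _ => τ, fun _ => zero_le_one, by simp,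
          fun _ => hσstate, fun _ => hτstate, by simp⟩
      have hherm : (σ ⊗ₖ τ).IsHermitian :=
        kron_isHermitian hσstate.1.isHermitian hτstate.1.isHermitian
      have hf : u < f (σ ⊗ₖ τ) := hsep _ (subset_closure hmem)
      have htr1 : (σ ⊗ₖ τ).trace = 1 := by
        rw [Matrix.trace_kronecker, hσstate.2, hτstate.2, one_mul]
      have hval : (A * (σ ⊗ₖ τ)).trace = ((f (σ ⊗ₖ τ) - u : ℝ) : ℂ) := by
        rw [htrace _ hherm, htr1]
        push_cast
        ring
      have hPQeq : (P ⊗ₖ Q) = (((rP : ℝ) : ℂ) * ((rQ : ℝ) : ℂ)) • (σ ⊗ₖ τ) := by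
        conv_lhs => rw [hPeq, hQeq]
        rw [Matrix.smul_kronecker, Matrix.kronecker_smul, smul_smul]
      calc (0 : ℂ) ≤ ((rP : ℝ) : ℂ) * ((rQ : ℝ) : ℂ) * ((f (σ ⊗ₖ τ) - u : ℝ) : ℂ) := by
            refine mul_nonneg (mul_nonneg ?_ ?_) ?_
            · rw [Complex.zero_le_real]; exact hrPpos.le
            · rw [Complex.zero_le_real]; exact hrQpos.le
            · rw [Complex.zero_le_real]; linarith [hf]
        _ = (A * (P ⊗ₖ Q)).trace := by
            rw [hPQeq, Matrix.mul_smul, Matrix.trace_smul, smul_eq_mul, hval]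
    have hfinal := H A hA hwit
    rw [htrace ρ hρ.1.isHermitian, hρ.2, mul_one] at hfinal
    have h2 : (0 : ℝ) ≤ f ρ - u := by
      rwa [show ((f ρ : ℝ) : ℂ) - (u : ℂ) = ((f ρ - u : ℝ) : ℂ) from by push_cast; ring,
        Complex.zero_le_real] at hfinal
    linarith
end

section
/- (Peres criterion, necessity) If ρ is a separable state on H₁ ⊗ H₂, then its partial transposition ρ^{T₂} = (I ⊗ T)(ρ) is positive semidefinite, where T is transposition with respect to a fixed orthonormal basis of H₂. -/
open Matrix
open scoped Kronecker ComplexOrder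

lemma kron_conjTranspose {p q : Type*} [Fintype p] [Fintype q] [DecidableEq p] [DecidableEq q]
    (A : Matrix p p ℂ) (B : Matrix q q ℂ) : (A ⊗ₖ B)ᴴ = Aᴴ ⊗ₖ Bᴴ := by
  ext ⟨i, j⟩ ⟨k, l⟩
  simp only [Matrix.conjTranspose_apply, Matrix.kroneckerMap_apply, star_mul']

lemma posSemidef_kronecker {p q : Type*} [Fintype p] [Fintype q] [DecidableEq p] [DecidableEq q]
    {A : Matrix p p ℂ} {B : Matrix q q ℂ} (hA : A.PosSemidef) (hB : B.PosSemidef) :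
    (A ⊗ₖ B).PosSemidef := by
  exact hA.kronecker hB

lemma posSemidef_real_smul {ι : Type*} [Fintype ι] {A : Matrix ι ι ℂ} (hA : A.PosSemidef)
    {c : ℝ} (hc : 0 ≤ c) : ((c : ℂ) • A).PosSemidef := by
  refine Matrix.PosSemidef.of_dotProduct_mulVec_nonneg ?_ fun x => ?_
  · unfold Matrix.IsHermitian
    rw [Matrix.conjTranspose_smul, hA.1.eq]
    simp
  · rw [Matrix.smul_mulVec, dotProduct_smul, smul_eq_mul]
    exact mul_nonneg (by exact_mod_cast hc) (hA.dotProduct_mulVec_nonneg x)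

lemma isClosed_posSemidef {ι : Type*} [Fintype ι] :
    IsClosed {A : Matrix ι ι ℂ | A.PosSemidef} := by
  have h1 : {A : Matrix ι ι ℂ | A.PosSemidef} =
      {A : Matrix ι ι ℂ | Aᴴ = A} ∩ ⋂ x : ι → ℂ, {A | 0 ≤ dotProduct (star x) (A *ᵥ x)} := by
    ext A
    simp only [Set.mem_setOf_eq, Set.mem_inter_iff, Set.mem_iInter]
    exact Matrix.posSemidef_iff_dotProduct_mulVec
  rw [h1]
  have hct : ∀ i j : ι, Continuous fun A : Matrix ι ι ℂ => A i j := fun i j =>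
    (continuous_apply j).comp (continuous_apply i)
  refine IsClosed.inter (isClosed_eq ?_ continuous_id) (isClosed_iInter fun x => ?_)
  · exact continuous_pi fun i => continuous_pi fun j => ((hct j i).star)
  · have hc : Continuous fun A : Matrix ι ι ℂ => dotProduct (star x) (A *ᵥ x) := by
      unfold dotProduct Matrix.mulVec dotProduct
      exact continuous_finset_sum _ fun i _ => (continuous_const.mul
        (continuous_finset_sum _ fun j _ => (hct i j).mul continuous_const))
    have h2 : {A : Matrix ι ι ℂ | 0 ≤ dotProduct (star x) (A *ᵥ x)} =
        (fun A : Matrix ι ι ℂ => dotProduct (star x) (A *ᵥ x)) ⁻¹'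
          ({z : ℂ | 0 ≤ z.re} ∩ {z : ℂ | z.im = 0}) := by
      ext A
      simp only [Set.mem_setOf_eq, Set.mem_preimage, Set.mem_inter_iff]
      rw [Complex.le_def]
      simp [eq_comm]
    rw [h2]
    exact (IsClosed.inter (isClosed_le continuous_const Complex.continuous_re)
      (isClosed_eq Complex.continuous_im continuous_const)).preimage hc

lemma continuous_ptranspose {α β : Type*} [Fintype α] [Fintype β] :
    Continuous fun ρ : Matrix (α × β) (α × β) ℂ => ptranspose ρ := by
  refine continuous_pi fun p => continuous_pi fun q => ?_
  exact (continuous_apply (q.1, p.2)).comp (continuous_apply (p.1, q.2))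

lemma ptranspose_sum {α β : Type*} {k : ℕ} (f : Fin k → Matrix (α × β) (α × β) ℂ) :
    ptranspose (∑ i, f i) = ∑ i, ptranspose (f i) := by
  ext p q
  simp only [ptranspose, Matrix.sum_apply]

lemma ptranspose_smul {α β : Type*} (c : ℂ) (A : Matrix (α × β) (α × β) ℂ) :
    ptranspose (c • A) = c • ptranspose A := by
  ext p q
  simp [ptranspose]

lemma ptranspose_kron {p q : ℕ} (A : Matrix (Fin p) (Fin p) ℂ) (B : Matrix (Fin q) (Fin q) ℂ) :
    ptranspose (A ⊗ₖ B) = A ⊗ₖ Bᵀ := by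
  ext ⟨i, j⟩ ⟨k, l⟩
  simp [ptranspose, Matrix.kroneckerMap_apply]

set_option maxHeartbeats 1000000 in
/-- Peres criterion, necessity: separable states have positive
semidefinite partial transpose. -/
theorem partial_transpose_posSemidef_of_separable {m n : ℕ}
    (ρ : Matrix (Fin m × Fin n) (Fin m × Fin n) ℂ) (hρ : SepState ρ) :
    (ptranspose ρ).PosSemidef := by
  have hmem : ρ ∈ closure (SepCombos m n) := hρ.2
  have hsub : ∀ A ∈ SepCombos m n, ptranspose A ∈
      {A : Matrix (Fin m × Fin n) (Fin m × Fin n) ℂ | A.PosSemidef} := by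
    rintro A ⟨k, p, σ, τ, hp, _, hσ, hτ, rfl⟩
    simp only [Set.mem_setOf_eq, ptranspose_sum, ptranspose_smul, ptranspose_kron]
    apply Finset.sum_induction _ Matrix.PosSemidef (fun a b ha hb => ha.add hb)
      Matrix.PosSemidef.zero
    intro i _
    exact posSemidef_real_smul (posSemidef_kronecker (hσ i).1 ((hτ i).1.transpose)) (hp i)
  have := map_mem_closure continuous_ptranspose hmem hsub
  exact (isClosed_posSemidef.closure_subset this)
end
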